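/- arXiv:1907.00847 — 3 statements merged into one kernel-verified Lean document; each statement's English description precedes it below -/
import Mathlib

section
/- The matrix A_n has eigenvalue √n with multiplicity exactly 2^{n-1} and eigenvalue -√n with multiplicity exactly 2^{n-1}. -/
/-- The Huang matrix sequence: `A 0` is the 1×1 zero matrix, and
`A (n+1) = [[A n, I], [I, -(A n)]]`, so that `A 1 = [[0,1],[1,0]]`. -/
def huangMatrix : (n : ℕ) → Matrix (Fin (2 ^ n)) (Fin (2 ^ n)) ℝ
  | 0 => 0
  | n + 1 =>
    (Matrix.reindex (finSumFinEquiv.trans (finCongr (by rw [pow_succ, mul_two])))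
        (finSumFinEquiv.trans (finCongr (by rw [pow_succ, mul_two]))))
      (Matrix.fromBlocks (huangMatrix n) 1 1 (-(huangMatrix n)))

lemma huang_sq (n : ℕ) : huangMatrix n * huangMatrix n = (n : ℝ) • 1 := by
  induction n with
  | zero => simp [huangMatrix]
  | succ n ih =>
    rw [huangMatrix, Matrix.reindex_apply, Matrix.submatrix_mul_equiv,
      Matrix.fromBlocks_multiply, ih]
    have : Matrix.fromBlocks ((n : ℝ) • 1 + 1 * 1)
        (huangMatrix n * 1 + 1 * -huangMatrix n) (1 * huangMatrix n + -huangMatrix n * 1)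
        (1 * 1 + -huangMatrix n * -huangMatrix n)
        = ((n : ℝ) + 1) • (1 : Matrix _ _ ℝ) := by
      rw [neg_mul_neg, ih]
      simp only [Matrix.mul_one, Matrix.one_mul, add_neg_cancel, mul_one, neg_mul, one_mul]
      rw [← Matrix.fromBlocks_one, Matrix.fromBlocks_smul]
      simp [add_smul, add_comm]
    rw [this]
    have h2 : ∀ (e : Fin (2^(n+1)) ≃ (Fin (2^n) ⊕ Fin (2^n))) (r : ℝ)
        (M : Matrix (Fin (2^n) ⊕ Fin (2^n)) (Fin (2^n) ⊕ Fin (2^n)) ℝ),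
        (r • M).submatrix e e = r • M.submatrix e e := fun _ _ _ => rfl
    rw [h2, Matrix.submatrix_one_equiv]
    push_cast
    ring_nf

lemma trace_submatrix_equiv {m l : Type*} [Fintype m] [Fintype l]
    (M : Matrix m m ℝ) (e : l ≃ m) : (M.submatrix e e).trace = M.trace := by
  unfold Matrix.trace
  rw [← Equiv.sum_comp e (fun i => M.diag i)]
  rfl

lemma trace_fromBlocks {m o : Type*} [Fintype m] [Fintype o] (A : Matrix m m ℝ)
    (B : Matrix m o ℝ) (C : Matrix o m ℝ) (D : Matrix o o ℝ) :
    (Matrix.fromBlocks A B C D).trace = A.trace + D.trace := by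
  unfold Matrix.trace
  rw [Fintype.sum_sum_type]
  rfl

lemma huang_trace (n : ℕ) : (huangMatrix n).trace = 0 := by
  induction n with
  | zero => simp [huangMatrix]
  | succ n ih =>
    rw [huangMatrix, Matrix.reindex_apply, trace_submatrix_equiv,
      trace_fromBlocks, Matrix.trace_neg, ih]
    simp

lemma trace_toLin' {m : ℕ} (M : Matrix (Fin m) (Fin m) ℝ) :
    LinearMap.trace ℝ _ (Matrix.toLin' M) = M.trace := by
  rw [LinearMap.trace_eq_matrix_trace ℝ (Pi.basisFun ℝ (Fin m)),
    LinearMap.toMatrix_eq_toMatrix', LinearMap.toMatrix'_toLin']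

theorem huangMatrix_eigenspace_dims (n : ℕ) (hn : 1 ≤ n) :
    Module.finrank ℝ
        (Module.End.eigenspace (Matrix.toLin' (huangMatrix n)) (Real.sqrt n)) = 2 ^ (n - 1) ∧
    Module.finrank ℝ
        (Module.End.eigenspace (Matrix.toLin' (huangMatrix n)) (-Real.sqrt n)) = 2 ^ (n - 1) := by
  set a := Real.sqrt n with ha
  have han : a * a = n := Real.mul_self_sqrt (by positivity)
  have ha0 : 0 < a := Real.sqrt_pos.2 (by exact_mod_cast hn)
  set f := Matrix.toLin' (huangMatrix n) with hfdef
  have hff : ∀ x, f (f x) = (n : ℝ) • x := by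
    intro x
    have : f (f x) = Matrix.toLin' (huangMatrix n * huangMatrix n) x := by
      rw [Matrix.toLin'_mul]; rfl
    rw [this, huang_sq]
    simp
  have htrf : LinearMap.trace ℝ _ f = 0 := by
    rw [hfdef, trace_toLin', huang_trace]
  have htrid : LinearMap.trace ℝ (Fin (2^n) → ℝ) LinearMap.id = (2^n : ℝ) := by
    rw [LinearMap.trace_id]
    simp [Module.finrank_fin_fun]
  have hcast : ((2 ^ (n - 1) : ℕ) : ℝ) = (2 : ℝ) ^ n / 2 := by
    obtain ⟨m, rfl⟩ : ∃ m, n = m + 1 := ⟨n - 1, (Nat.succ_pred_eq_of_pos hn).symm⟩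
    rw [Nat.add_sub_cancel]
    push_cast
    rw [pow_succ]
    ring
  constructor
  · set P : (Fin (2^n) → ℝ) →ₗ[ℝ] (Fin (2^n) → ℝ) :=
      (2*a)⁻¹ • (f + a • LinearMap.id) with hP
    have hproj : LinearMap.IsProj (Module.End.eigenspace f a) P := by
      constructor
      · intro x
        rw [Module.End.mem_eigenspace_iff]
        simp only [hP, LinearMap.smul_apply, LinearMap.add_apply, LinearMap.id_apply,
          map_smul, map_add, hff, ← han]
        module
      · intro x hx
        rw [Module.End.mem_eigenspace_iff] at hx
        simp only [hP, LinearMap.smul_apply, LinearMap.add_apply, LinearMap.id_apply, hx]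
        match_scalars
        field_simp
        ring
    have htr := hproj.trace
    rw [hP] at htr
    simp only [map_smul, map_add, LinearMap.map_smul, htrf, htrid, smul_eq_mul] at htr
    have : ((Module.finrank ℝ (Module.End.eigenspace f a) : ℕ) : ℝ)
        = ((2 ^ (n - 1) : ℕ) : ℝ) := by
      rw [← htr, hcast]
      field_simp
      ring
    exact_mod_cast this
  · set P : (Fin (2^n) → ℝ) →ₗ[ℝ] (Fin (2^n) → ℝ) :=
      (2*a)⁻¹ • (a • LinearMap.id - f) with hP
    have hproj : LinearMap.IsProj (Module.End.eigenspace f (-a)) P := by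
      constructor
      · intro x
        rw [Module.End.mem_eigenspace_iff]
        simp only [hP, LinearMap.smul_apply, LinearMap.sub_apply, LinearMap.id_apply,
          map_smul, map_sub, hff, ← han]
        module
      · intro x hx
        rw [Module.End.mem_eigenspace_iff] at hx
        simp only [hP, LinearMap.smul_apply, LinearMap.sub_apply, LinearMap.id_apply, hx]
        match_scalars
        field_simp
        ring
    have htr := hproj.trace
    rw [hP] at htr
    simp only [map_smul, map_sub, LinearMap.map_smul, htrf, htrid, smul_eq_mul] at htr
    have : ((Module.finrank ℝ (Module.End.eigenspace f (-a)) : ℕ) : ℝ)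
        = ((2 ^ (n - 1) : ℕ) : ℝ) := by
      rw [← htr, hcast]
      field_simp
      ring
    exact_mod_cast this
end

section
/- (Cauchy interlacing, special case) Let A be a symmetric n × n real matrix and B an m × m principal submatrix of A (m < n), with eigenvalues λ_1 ≥ ... ≥ λ_n and μ_1 ≥ ... ≥ μ_m respectively. Then μ_1 ≥ λ_{1 + n - m}. -/
/-!
Diagonalize `A = U diag(λ) Uᵀ` with `U` orthogonal. Fewer than `m` eigenvalues of `A` lie below
`c := λ_{1+n-m}`, so by a dimension count some nonzero `y : ℝᵐ` makes `Uᵀ x` vanish on their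
indices, where `x` is `y` extended by zero along `f`. Then `c ‖y‖² ≤ xᵀ A x = yᵀ B y ≤ μ₁ ‖y‖²`.
-/

open Polynomial Finset Matrix

namespace Matrix

variable {ι κ : Type*} [Fintype ι]

lemma mulVec_dotProduct_mulVec_mulVec {R : Type*} [CommSemiring R] [Fintype κ]
    (P : Matrix ι κ R) (A : Matrix ι ι R) (y : κ → R) :
    (P *ᵥ y) ⬝ᵥ (A *ᵥ (P *ᵥ y)) = y ⬝ᵥ ((Pᵀ * A * P) *ᵥ y) := by
  rw [← mulVec_mulVec, ← mulVec_mulVec, dotProduct_mulVec y Pᵀ, vecMul_transpose]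

lemma dotProduct_submatrix_mulVec {R : Type*} [CommSemiring R] [Fintype κ] [DecidableEq ι]
    (A : Matrix ι ι R) (f : κ → ι) (y : κ → R) :
    y ⬝ᵥ (A.submatrix f f *ᵥ y) =
      ((1 : Matrix ι ι R).submatrix id f *ᵥ y) ⬝ᵥ (A *ᵥ ((1 : Matrix ι ι R).submatrix id f *ᵥ y)) := by
  have hB : A.submatrix f f =
      ((1 : Matrix ι ι R).submatrix id f)ᵀ * A * (1 : Matrix ι ι R).submatrix id f := by
    ext i j
    simp [Matrix.mul_apply, Matrix.one_apply]
  rw [mulVec_dotProduct_mulVec_mulVec, ← hB]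

lemma exists_mulVec_eq_zero_of_card_lt {K : Type*} [Field K] [Fintype κ] (M : Matrix κ ι K)
    (h : Fintype.card κ < Fintype.card ι) : ∃ v ≠ 0, M *ᵥ v = 0 := by
  obtain ⟨v, hv, hv0⟩ := Submodule.ne_bot_iff _ |>.1 <|
    LinearMap.ker_ne_bot_of_finrank_lt (f := M.mulVecLin) (by simpa using h)
  exact ⟨v, hv0, hv⟩

section Diagonalized

variable {R : Type*} [CommRing R] [DecidableEq ι] {A U : Matrix ι ι R} {d : ι → R}

lemma dotProduct_mulVec_eq_sum_of_diagonal (hU : U * Uᵀ = 1) (hUA : Uᵀ * A * U = diagonal d)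
    (x : ι → R) : x ⬝ᵥ (A *ᵥ x) = ∑ i, d i * (Uᵀ *ᵥ x) i ^ 2 := by
  have hx : x = U *ᵥ (Uᵀ *ᵥ x) := by rw [mulVec_mulVec, hU, one_mulVec]
  rw [hx, mulVec_dotProduct_mulVec_mulVec, hUA, ← hx]
  simp [dotProduct, mulVec_diagonal, sq, mul_left_comm]

lemma dotProduct_self_eq_sum_of_mul_transpose_eq_one (hU : U * Uᵀ = 1) (x : ι → R) :
    x ⬝ᵥ x = ∑ i, (Uᵀ *ᵥ x) i ^ 2 := by
  calc x ⬝ᵥ x = (Uᵀ *ᵥ x) ⬝ᵥ (Uᵀ *ᵥ x) := by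
        rw [dotProduct_mulVec, vecMul_transpose, mulVec_mulVec, hU, one_mulVec]
    _ = ∑ i, (Uᵀ *ᵥ x) i ^ 2 := by simp [dotProduct, sq]

lemma dotProduct_mulVec_le_of_diagonal [LinearOrder R] [IsStrictOrderedRing R]
    (hU : U * Uᵀ = 1) (hUA : Uᵀ * A * U = diagonal d) {c : R} (hc : ∀ i, d i ≤ c) (x : ι → R) :
    x ⬝ᵥ (A *ᵥ x) ≤ c * (x ⬝ᵥ x) := by
  rw [dotProduct_mulVec_eq_sum_of_diagonal hU hUA,
    dotProduct_self_eq_sum_of_mul_transpose_eq_one hU, mul_sum]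
  exact sum_le_sum fun i _ => mul_le_mul_of_nonneg_right (hc i) (sq_nonneg _)

lemma le_dotProduct_mulVec_of_diagonal [LinearOrder R] [IsStrictOrderedRing R]
    (hU : U * Uᵀ = 1) (hUA : Uᵀ * A * U = diagonal d) {c : R} (x : ι → R)
    (hx : ∀ i, d i < c → (Uᵀ *ᵥ x) i = 0) :
    c * (x ⬝ᵥ x) ≤ x ⬝ᵥ (A *ᵥ x) := by
  rw [dotProduct_mulVec_eq_sum_of_diagonal hU hUA,
    dotProduct_self_eq_sum_of_mul_transpose_eq_one hU, mul_sum]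
  refine sum_le_sum fun i _ => ?_
  rcases lt_or_ge (d i) c with hi | hi
  · simp [hx i hi]
  · exact mul_le_mul_of_nonneg_right hi (sq_nonneg _)

end Diagonalized

namespace IsHermitian

variable [DecidableEq ι] {A : Matrix ι ι ℝ}

lemma mul_transpose_eigenvectorUnitary (hA : A.IsHermitian) :
    (hA.eigenvectorUnitary : Matrix ι ι ℝ) * (hA.eigenvectorUnitary : Matrix ι ι ℝ)ᵀ = 1 := by
  simpa [star_eq_conjTranspose] using Unitary.mul_star_self_of_mem hA.eigenvectorUnitary.2

lemma transpose_eigenvectorUnitary_mul_mul (hA : A.IsHermitian) :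
    (hA.eigenvectorUnitary : Matrix ι ι ℝ)ᵀ * A * hA.eigenvectorUnitary =
      diagonal hA.eigenvalues := by
  simpa [Unitary.conjStarAlgAut_star_apply, star_eq_conjTranspose] using
    hA.conjStarAlgAut_star_eigenvectorUnitary

lemma map_eigenvalues_eq_of_charpoly_eq (hA : A.IsHermitian) {a : ι → ℝ}
    (h : A.charpoly = ∏ i, (X - C (a i))) :
    univ.val.map hA.eigenvalues = univ.val.map a := by
  have := hA.roots_charpoly_eq_eigenvalues
  rw [h, roots_prod _ _ (prod_ne_zero_iff.2 fun i _ => X_sub_C_ne_zero (a i))] at this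
  simpa using this.symm

end IsHermitian

end Matrix

lemma Antitone.card_filter_lt_le_of_map_eq {ι α : Type*} [Fintype ι] [LinearOrder α] {k : ℕ}
    {a : Fin k → α} (ha : Antitone a) {b : ι → α} (hab : univ.val.map b = univ.val.map a)
    (j : Fin k) : #{i | b i < a j} ≤ k - 1 - j := by
  have hcount : #{i | b i < a j} = #{i | a i < a j} := by
    have := congrArg (Multiset.countP (· < a j)) hab
    rwa [Multiset.countP_map, Multiset.countP_map] at this
  calc #{i | b i < a j} = #{i | a i < a j} := hcount
    _ ≤ #(Ioi j) := card_le_card fun i hi => by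
        simp only [mem_filter, mem_univ, true_and] at hi
        exact mem_Ioi.2 (lt_of_not_ge fun hij => (ha hij).not_gt hi)
    _ = k - 1 - j := Fin.card_Ioi j

lemma Antitone.le_apply_zero_of_map_eq {ι α : Type*} [Fintype ι] [Preorder α] {k : ℕ}
    {a : Fin k → α} (ha : Antitone a) {b : ι → α} (hab : univ.val.map b = univ.val.map a)
    (hk : 0 < k) (i : ι) : b i ≤ a ⟨0, hk⟩ := by
  obtain ⟨j, -, hj⟩ := Multiset.mem_map.1 (hab ▸ Multiset.mem_map_of_mem b (mem_univ i))
  exact hj ▸ ha (show (⟨0, hk⟩ : Fin k) ≤ j from Nat.zero_le _)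

theorem cauchy_interlacing_special_case (n m : ℕ) (hm : 0 < m) (hmn : m < n)
    (A : Matrix (Fin n) (Fin n) ℝ) (hA : A.IsSymm)
    (f : Fin m → Fin n) (hf : Function.Injective f)
    (lam : Fin n → ℝ) (hlam : Antitone lam)
    (hchA : A.charpoly = ∏ i, (Polynomial.X - Polynomial.C (lam i)))
    (mu : Fin m → ℝ) (hmu : Antitone mu)
    (hchB : (A.submatrix f f).charpoly = ∏ j, (Polynomial.X - Polynomial.C (mu j))) :
    lam ⟨n - m, by omega⟩ ≤ mu ⟨0, hm⟩ := by
  set c := lam ⟨n - m, by omega⟩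
  have hA' : A.IsHermitian := isHermitian_iff_isSymm.2 hA
  have hB' : (A.submatrix f f).IsHermitian := isHermitian_iff_isSymm.2 (hA.submatrix f)
  set U : Matrix (Fin n) (Fin n) ℝ := ↑hA'.eigenvectorUnitary
  set P : Matrix (Fin n) (Fin m) ℝ := (1 : Matrix (Fin n) (Fin n) ℝ).submatrix id f
  have hfew : Fintype.card {i // hA'.eigenvalues i < c} < m := by
    rw [Fintype.card_subtype]
    calc _ ≤ n - 1 - (n - m) :=
          hlam.card_filter_lt_le_of_map_eq (hA'.map_eigenvalues_eq_of_charpoly_eq hchA) _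
      _ < m := by omega
  obtain ⟨y, hy0, hy⟩ :=
    exists_mulVec_eq_zero_of_card_lt ((Uᵀ * P).submatrix Subtype.val id) (by simpa using hfew)
  have hnorm : (P *ᵥ y) ⬝ᵥ (P *ᵥ y) = y ⬝ᵥ y := by
    simpa [submatrix_one f hf] using (dotProduct_submatrix_mulVec 1 f y).symm
  have hlower : c * (y ⬝ᵥ y) ≤ y ⬝ᵥ (A.submatrix f f *ᵥ y) := by
    rw [← hnorm, dotProduct_submatrix_mulVec]
    refine le_dotProduct_mulVec_of_diagonal hA'.mul_transpose_eigenvectorUnitary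
      hA'.transpose_eigenvectorUnitary_mul_mul _ fun i hi => ?_
    rw [mulVec_mulVec]
    exact congrFun hy ⟨i, hi⟩
  have hupper : y ⬝ᵥ (A.submatrix f f *ᵥ y) ≤ mu ⟨0, hm⟩ * (y ⬝ᵥ y) :=
    dotProduct_mulVec_le_of_diagonal hB'.mul_transpose_eigenvectorUnitary
      hB'.transpose_eigenvectorUnitary_mul_mul
      (hmu.le_apply_zero_of_map_eq (hB'.map_eigenvalues_eq_of_charpoly_eq hchB) hm) y
  have hpos : 0 < y ⬝ᵥ y := by simpa using dotProduct_star_self_pos_iff.2 hy0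
  exact le_of_mul_le_mul_right (hlower.trans hupper) hpos
end

section
/- Let B be any principal submatrix of A_n of size (2^{n-1}+1) × (2^{n-1}+1). Then the largest eigenvalue of B is at least √n. -/
def huangQ : (n : ℕ) → Matrix (Fin (2 ^ n)) (Fin (2 ^ n)) ℝ
  | 0 => 1
  | n + 1 =>
    (Matrix.reindex (finSumFinEquiv.trans (finCongr (by rw [pow_succ, mul_two])))
        (finSumFinEquiv.trans (finCongr (by rw [pow_succ, mul_two]))))
      (Matrix.fromBlocks (huangQ n) 0 0 (-(huangQ n)))

open Matrix in
lemma my_reindex_mul {m n : Type*} [Fintype m] [Fintype n] [DecidableEq m] [DecidableEq n]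
    (e : m ≃ n) (M N : Matrix m m ℝ) :
    reindex e e M * reindex e e N = reindex e e (M * N) := by
  simp [Matrix.reindex_apply, Matrix.submatrix_mul_equiv]

open Matrix in
lemma my_reindex_one {m n : Type*} [Fintype m] [Fintype n] [DecidableEq m] [DecidableEq n]
    (e : m ≃ n) : reindex e e (1 : Matrix m m ℝ) = 1 := by
  simp

open Matrix in
lemma my_reindex_neg {m n : Type*} (e : m ≃ n) (M : Matrix m m ℝ) :
    reindex e e (-M) = -(reindex e e M) := by
  simp [Matrix.reindex_apply, Matrix.submatrix_neg]

open Matrix in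
lemma my_reindex_smul {m n : Type*} (e : m ≃ n) (c : ℝ) (M : Matrix m m ℝ) :
    reindex e e (c • M) = c • (reindex e e M) := by
  simp [Matrix.reindex_apply, Matrix.submatrix_smul]

lemma huangQ_sq (n : ℕ) : huangQ n * huangQ n = 1 := by
  induction n with
  | zero => simp [huangQ]
  | succ n ih =>
    rw [huangQ, my_reindex_mul, Matrix.fromBlocks_multiply]
    simp only [Matrix.mul_zero, Matrix.zero_mul, Matrix.neg_mul, Matrix.mul_neg, neg_neg,
      add_zero, zero_add, neg_zero, ih]
    rw [Matrix.fromBlocks_one, my_reindex_one]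

lemma huangQ_anticomm (n : ℕ) : huangQ n * huangMatrix n = -(huangMatrix n * huangQ n) := by
  induction n with
  | zero => simp [huangQ, huangMatrix]
  | succ n ih =>
    rw [huangQ, huangMatrix, my_reindex_mul, my_reindex_mul, Matrix.fromBlocks_multiply,
      Matrix.fromBlocks_multiply, ← my_reindex_neg]
    congr 1
    rw [Matrix.fromBlocks_neg]
    simp only [Matrix.mul_zero, Matrix.zero_mul, Matrix.mul_one, Matrix.one_mul,
      Matrix.neg_mul, Matrix.mul_neg, neg_neg, add_zero, zero_add, neg_zero, ih]

open Matrix in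
theorem principal_submatrix_largest_eigenvalue (n : ℕ) (hn : 1 ≤ n)
    (f : Fin (2 ^ (n - 1) + 1) → Fin (2 ^ n)) (hf : Function.Injective f) :
    ∃ μ ∈ spectrum ℝ ((huangMatrix n).submatrix f f), Real.sqrt n ≤ μ := by
  classical
  set μ : ℝ := Real.sqrt n with hμ
  have hμpos : 0 < μ := Real.sqrt_pos.mpr (by exact_mod_cast hn)
  have hμsq : μ * μ = n := Real.mul_self_sqrt (by positivity)
  set A := huangMatrix n with hA
  set Q := huangQ n with hQ
  set Ep : Submodule ℝ (Fin (2^n) → ℝ) :=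
    LinearMap.ker (Matrix.mulVecLin A - μ • LinearMap.id) with hEp
  set Em : Submodule ℝ (Fin (2^n) → ℝ) :=
    LinearMap.ker (Matrix.mulVecLin A + μ • LinearMap.id) with hEm
  have memEp : ∀ v, v ∈ Ep ↔ A *ᵥ v = μ • v := by
    intro v
    simp [hEp, LinearMap.mem_ker, sub_eq_zero, Matrix.mulVecLin_apply]
  have memEm : ∀ v, v ∈ Em ↔ A *ᵥ v = -(μ • v) := by
    intro v
    simp [hEm, LinearMap.mem_ker, add_eq_zero_iff_eq_neg, Matrix.mulVecLin_apply]
  have hAA : ∀ v, A *ᵥ (A *ᵥ v) = (n : ℝ) • v := by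
    intro v
    rw [Matrix.mulVec_mulVec, hA, huang_sq, Matrix.smul_mulVec, Matrix.one_mulVec]
  have hsup : Ep ⊔ Em = ⊤ := by
    rw [eq_top_iff]
    intro v _
    have h1 : (2*μ)⁻¹ • (A *ᵥ v + μ • v) ∈ Ep := by
      rw [memEp, Matrix.mulVec_smul, Matrix.mulVec_add, hAA, Matrix.mulVec_smul, ← hμsq]
      module
    have h2 : (2*μ)⁻¹ • (μ • v - A *ᵥ v) ∈ Em := by
      rw [memEm, Matrix.mulVec_smul, Matrix.mulVec_sub, hAA, Matrix.mulVec_smul, ← hμsq]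
      module
    have hveq : v = (2*μ)⁻¹ • (A *ᵥ v + μ • v) + (2*μ)⁻¹ • (μ • v - A *ᵥ v) := by
      rw [← smul_add]
      have : (A *ᵥ v + μ • v) + (μ • v - A *ᵥ v) = (2*μ) • v := by module
      rw [this, smul_smul, inv_mul_cancel₀ (by positivity), one_smul]
    rw [hveq]
    exact Submodule.add_mem_sup h1 h2
  have hQv : ∀ v ∈ Em, Q *ᵥ v ∈ Ep := by
    intro v hv
    rw [memEm] at hv
    rw [memEp, Matrix.mulVec_mulVec]
    have hac : A * Q = -(Q * A) := by
      have h := huangQ_anticomm n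
      rw [← hA, ← hQ] at h
      rw [eq_neg_iff_add_eq_zero] at h ⊢
      rw [add_comm]; exact h
    rw [hac, Matrix.neg_mulVec, ← Matrix.mulVec_mulVec, hv]
    simp [Matrix.mulVec_neg, Matrix.mulVec_smul]
  have hrankm : Module.finrank ℝ Em ≤ Module.finrank ℝ Ep := by
    have hinj : Function.Injective (Matrix.mulVecLin Q) := by
      intro a b hab
      have h2 : Q *ᵥ (Q *ᵥ a) = Q *ᵥ (Q *ᵥ b) := by
        simpa [Matrix.mulVecLin_apply] using congrArg (Q *ᵥ ·) hab
      rwa [Matrix.mulVec_mulVec, Matrix.mulVec_mulVec, hQ, huangQ_sq,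
        Matrix.one_mulVec, Matrix.one_mulVec] at h2
    calc Module.finrank ℝ Em = Module.finrank ℝ (Em.map (Matrix.mulVecLin Q)) :=
          (Submodule.equivMapOfInjective (Matrix.mulVecLin Q) hinj Em).finrank_eq
      _ ≤ Module.finrank ℝ Ep := by
          apply Submodule.finrank_mono
          rintro x ⟨v, hv, rfl⟩
          exact hQv v hv
  have htotal : Module.finrank ℝ (Fin (2^n) → ℝ) = 2^n := by
    simp [Module.finrank_fintype_fun_eq_card]
  have hpow : (2:ℕ)^n = 2 * 2^(n-1) := by
    conv_lhs => rw [show n = (n-1) + 1 by omega]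
    ring
  have hEppos : 2^(n-1) ≤ Module.finrank ℝ Ep := by
    have h1 : (2:ℕ)^n ≤ Module.finrank ℝ Ep + Module.finrank ℝ Em := by
      calc (2:ℕ)^n = Module.finrank ℝ (⊤ : Submodule ℝ (Fin (2^n) → ℝ)) := by
            rw [finrank_top, htotal]
        _ = Module.finrank ℝ (Ep ⊔ Em : Submodule ℝ (Fin (2^n) → ℝ)) := by rw [hsup]
        _ ≤ Module.finrank ℝ Ep + Module.finrank ℝ Em :=
            Submodule.finrank_add_le_finrank_add_finrank Ep Em
    omega
  set π : (Fin (2^n) → ℝ) →ₗ[ℝ] ({k : Fin (2^n) // k ∉ Set.range f} → ℝ) :=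
    LinearMap.funLeft ℝ ℝ Subtype.val with hπ
  set U : Submodule ℝ (Fin (2^n) → ℝ) := LinearMap.ker π with hU
  have memU : ∀ v, v ∈ U ↔ ∀ k, k ∉ Set.range f → v k = 0 := by
    intro v
    constructor
    · intro hv k hk
      have := congrFun hv ⟨k, hk⟩
      simpa [hπ, LinearMap.funLeft_apply] using this
    · intro h
      ext k
      exact h k.1 k.2
  have hcard : Fintype.card {k : Fin (2^n) // k ∉ Set.range f} = 2^n - (2^(n-1)+1) := by
    have hr : Fintype.card {k : Fin (2^n) // k ∈ Set.range f} = 2^(n-1)+1 := by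
      have := Set.card_range_of_injective hf
      simp only [Fintype.card_fin] at this
      convert this using 2
    have h2 := Fintype.card_subtype_compl (fun k : Fin (2^n) => k ∈ Set.range f)
    simp only [Fintype.card_fin] at h2
    calc Fintype.card {k : Fin (2^n) // k ∉ Set.range f}
        = Fintype.card {k : Fin (2^n) // ¬ k ∈ Set.range f} := by convert rfl
      _ = 2^n - Fintype.card {k : Fin (2^n) // k ∈ Set.range f} := h2
      _ = 2^n - (2^(n-1)+1) := by rw [hr]
  have hsz : 2^(n-1)+1 ≤ 2^n := by
    have h1 : 1 ≤ 2^(n-1) := Nat.one_le_two_pow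
    omega
  have hUrank : 2^(n-1)+1 ≤ Module.finrank ℝ U := by
    have hrn : Module.finrank ℝ (LinearMap.range π) + Module.finrank ℝ U = 2^n := by
      rw [hU, LinearMap.finrank_range_add_finrank_ker π, htotal]
    have hle : Module.finrank ℝ (LinearMap.range π) ≤ 2^n - (2^(n-1)+1) := by
      calc Module.finrank ℝ (LinearMap.range π)
          ≤ Module.finrank ℝ ({k : Fin (2^n) // k ∉ Set.range f} → ℝ) :=
            (LinearMap.range π).finrank_le
        _ = 2^n - (2^(n-1)+1) := by rw [Module.finrank_fintype_fun_eq_card, hcard]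
    omega
  have hinter : 0 < Module.finrank ℝ (Ep ⊓ U : Submodule ℝ (Fin (2^n) → ℝ)) := by
    have h1 := Submodule.finrank_sup_add_finrank_inf_eq Ep U
    have h2 := Submodule.finrank_le (Ep ⊔ U)
    rw [htotal] at h2
    omega
  obtain ⟨w, hwne⟩ := Module.finrank_pos_iff_exists_ne_zero.mp hinter
  obtain ⟨v, hv⟩ := w
  have hvEp : v ∈ Ep := hv.1
  have hvU : v ∈ U := hv.2
  have hvne' : v ≠ 0 := by
    intro h
    apply hwne
    ext
    simp [h]
  set B := (huangMatrix n).submatrix f f with hB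
  set x : Fin (2^(n-1)+1) → ℝ := fun i => v (f i) with hx
  have hxne : x ≠ 0 := by
    intro h
    apply hvne'
    funext k
    by_cases hk : k ∈ Set.range f
    · obtain ⟨i, rfl⟩ := hk
      exact congrFun h i
    · exact (memU v).mp hvU k hk
  have hBx : B *ᵥ x = μ • x := by
    funext i
    have hAv : (A *ᵥ v) (f i) = μ * v (f i) := by
      rw [(memEp v).mp hvEp]; rfl
    have key : (B *ᵥ x) i = (A *ᵥ v) (f i) := by
      simp only [Matrix.mulVec, dotProduct, hB, Matrix.submatrix_apply, hx, ← hA]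
      have e1 : ∑ k ∈ Finset.image f Finset.univ, A (f i) k * v k
          = ∑ j, A (f i) (f j) * v (f j) :=
        Finset.sum_image (fun a _ b _ h => hf h)
      have e2 : ∑ k ∈ Finset.image f Finset.univ, A (f i) k * v k
          = ∑ k, A (f i) k * v k := by
        apply Finset.sum_subset (Finset.subset_univ _)
        intro k _ hk
        have hk' : k ∉ Set.range f := by
          rintro ⟨j, hj⟩
          exact hk (Finset.mem_image.mpr ⟨j, Finset.mem_univ _, hj⟩)
        rw [(memU v).mp hvU k hk', mul_zero]
      rw [← e1, e2]
    rw [key, hAv]; rfl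
  refine ⟨μ, ?_, le_refl μ⟩
  rw [← AlgEquiv.spectrum_eq Matrix.toLinAlgEquiv' B]
  rw [← Module.End.hasEigenvalue_iff_mem_spectrum]
  exact Module.End.hasEigenvalue_of_hasEigenvector ⟨Module.End.mem_eigenspace_iff.mpr
    (by rw [Matrix.toLinAlgEquiv'_apply, hBx]), hxne⟩
end
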